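/- Let A, B be n×n complex matrices and let C = A + B. Then the total algebraic multiplicity of the new eigenvalues introduced by the perturbation satisfies ∑_{λ ∈ Λ(C) \ Λ(A)} m_a(C, λ) ≤ rank(B)·|Λ(A)| + d(A). -/

import Mathlib

open Matrix Polynomial Module

/-- The set of distinct eigenvalues of a matrix: the roots of its characteristic polynomial. -/
noncomputable def eigSet {n : ℕ} (M : Matrix (Fin n) (Fin n) ℂ) : Finset ℂ :=
  M.charpoly.roots.toFinset

/-- Algebraic multiplicity of `μ` as an eigenvalue of `M` (multiplicity as a root of the
characteristic polynomial; `0` if `μ` is not an eigenvalue). -/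
noncomputable def algMult {n : ℕ} (M : Matrix (Fin n) (Fin n) ℂ) (μ : ℂ) : ℕ :=
  M.charpoly.rootMultiplicity μ

/-- Geometric multiplicity of `μ` as an eigenvalue of `M`: the dimension of `ker (M - μ I)`. -/
noncomputable def geomMult {n : ℕ} (M : Matrix (Fin n) (Fin n) ℂ) (μ : ℂ) : ℕ :=
  Module.finrank ℂ (LinearMap.ker (M - μ • (1 : Matrix (Fin n) (Fin n) ℂ)).mulVecLin)

/-- The defectivity of a matrix: the sum over its distinct eigenvalues of the differences
between algebraic and geometric multiplicities. -/
noncomputable def defect {n : ℕ} (M : Matrix (Fin n) (Fin n) ℂ) : ℕ :=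
  ∑ μ ∈ eigSet M, (algMult M μ - geomMult M μ)

/-- A matrix is diagonalizable if it is similar to a diagonal matrix. -/
def IsDiagonalizable {n : ℕ} (M : Matrix (Fin n) (Fin n) ℂ) : Prop :=
  ∃ P D : Matrix (Fin n) (Fin n) ℂ, IsUnit P ∧ D.IsDiag ∧ M = P * D * P⁻¹

/-!
Since `C - μ I = (A - μ I) + B`, rank subadditivity gives `m_g(C, μ) ≥ m_g(A, μ) - rank B` for
every `μ`. Summing over `Λ(A)` and using `m_g ≤ m_a`, the old eigenvalues carry algebraic
multiplicity at least `∑ m_g(A, μ) - rank B · |Λ(A)| = n - d(A) - rank B · |Λ(A)|` in `C`, which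
leaves at most `rank B · |Λ(A)| + d(A)` of the `n` eigenvalues of `C` for the new ones.
-/

namespace Polynomial

theorem sum_rootMultiplicity_roots_toFinset {R : Type*} [CommRing R] [IsDomain R]
    [DecidableEq R] (p : R[X]) :
    ∑ a ∈ p.roots.toFinset, p.rootMultiplicity a = Multiset.card p.roots := by
  rw [← Multiset.toFinset_sum_count_eq]
  exact Finset.sum_congr rfl fun a _ => (count_roots p).symm

end Polynomial

namespace Matrix

variable {K m n : Type*} [Field K] [Fintype n]

theorem rank_add_le (A B : Matrix m n K) : (A + B).rank ≤ A.rank + B.rank := by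
  have h_range : LinearMap.range (A + B).mulVecLin ≤
      LinearMap.range A.mulVecLin ⊔ LinearMap.range B.mulVecLin := by
    rintro _ ⟨v, rfl⟩
    rw [mulVecLin_add]
    exact Submodule.add_mem_sup ⟨v, rfl⟩ ⟨v, rfl⟩
  exact (Submodule.finrank_mono h_range).trans
    (Submodule.finrank_add_le_finrank_add_finrank _ _)

theorem finrank_ker_mulVecLin_le_add_rank (A B : Matrix m n K) :
    finrank K (LinearMap.ker A.mulVecLin) ≤
      finrank K (LinearMap.ker (A + B).mulVecLin) + B.rank := by
  have hA := A.mulVecLin.finrank_range_add_finrank_ker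
  have hAB := (A + B).mulVecLin.finrank_range_add_finrank_ker
  have h_rank := rank_add_le A B
  simp only [rank] at h_rank ⊢
  omega

end Matrix

section Multiplicities

variable {n : ℕ}

theorem algMult_eq_zero_of_notMem_eigSet {M : Matrix (Fin n) (Fin n) ℂ} {μ : ℂ}
    (h : μ ∉ eigSet M) : algMult M μ = 0 := by
  rw [eigSet, Multiset.mem_toFinset, mem_roots M.charpoly_monic.ne_zero] at h
  exact rootMultiplicity_eq_zero h

theorem sum_algMult_eigSet (M : Matrix (Fin n) (Fin n) ℂ) :
    ∑ μ ∈ eigSet M, algMult M μ = n := by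
  simp only [eigSet, algMult]
  rw [sum_rootMultiplicity_roots_toFinset,
    IsAlgClosed.card_roots_eq_natDegree, charpoly_natDegree_eq_dim, Fintype.card_fin]

theorem sum_algMult_add_sum_algMult_sdiff (M : Matrix (Fin n) (Fin n) ℂ) (s : Finset ℂ) :
    ∑ μ ∈ s, algMult M μ + ∑ μ ∈ eigSet M \ s, algMult M μ = n := by
  have h_inter : ∑ μ ∈ s, algMult M μ = ∑ μ ∈ eigSet M ∩ s, algMult M μ :=
    (Finset.sum_subset Finset.inter_subset_right fun μ hμs hμ =>
      algMult_eq_zero_of_notMem_eigSet fun hμM => hμ (Finset.mem_inter.mpr ⟨hμM, hμs⟩)).symm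
  rw [h_inter, Finset.sum_inter_add_sum_sdiff, sum_algMult_eigSet]

theorem geomMult_le_algMult (M : Matrix (Fin n) (Fin n) ℂ) (μ : ℂ) :
    geomMult M μ ≤ algMult M μ := by
  have h_eigenspace : Module.End.eigenspace M.mulVecLin μ =
      LinearMap.ker (M - μ • (1 : Matrix (Fin n) (Fin n) ℂ)).mulVecLin := by
    ext v
    simp [sub_eq_zero]
  rw [geomMult, algMult, ← h_eigenspace, ← charpoly_mulVecLin]
  exact LinearMap.finrank_eigenspace_le _ μ

theorem sum_geomMult_add_defect (M : Matrix (Fin n) (Fin n) ℂ) :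
    ∑ μ ∈ eigSet M, geomMult M μ + defect M = n := by
  rw [defect, ← Finset.sum_add_distrib]
  exact (Finset.sum_congr rfl fun μ _ => Nat.add_sub_of_le (geomMult_le_algMult M μ)).trans
    (sum_algMult_eigSet M)

theorem geomMult_le_geomMult_add_add_rank (A B : Matrix (Fin n) (Fin n) ℂ) (μ : ℂ) :
    geomMult A μ ≤ geomMult (A + B) μ + B.rank := by
  rw [geomMult, geomMult, add_sub_right_comm]
  exact finrank_ker_mulVecLin_le_add_rank _ B

end Multiplicities

/-- the total algebraic multiplicity of the new eigenvalues introduced by the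
perturbation is at most `rank(B)·|Λ(A)| + d(A)`. -/
theorem sum_algMult_new_eigenvalues_le {n : ℕ}
    (A B C : Matrix (Fin n) (Fin n) ℂ) (hC : C = A + B) :
    ∑ μ ∈ eigSet C \ eigSet A, algMult C μ ≤ B.rank * (eigSet A).card + defect A := by
  subst hC
  have h_total := sum_algMult_add_sum_algMult_sdiff (A + B) (eigSet A)
  have h_defect := sum_geomMult_add_defect A
  have h_old : ∑ μ ∈ eigSet A, geomMult A μ ≤
      ∑ μ ∈ eigSet A, algMult (A + B) μ + B.rank * (eigSet A).card :=
    calc ∑ μ ∈ eigSet A, geomMult A μ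
        ≤ ∑ μ ∈ eigSet A, (algMult (A + B) μ + B.rank) := Finset.sum_le_sum fun μ _ =>
          (geomMult_le_geomMult_add_add_rank A B μ).trans
            (Nat.add_le_add_right (geomMult_le_algMult _ μ) _)
      _ = ∑ μ ∈ eigSet A, algMult (A + B) μ + B.rank * (eigSet A).card := by
          rw [Finset.sum_add_distrib, Finset.sum_const, smul_eq_mul, mul_comm]
  omega
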